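/- The rank-metric lattice L_i(n,m;q) is supersolvable if and only if i ∈ {1, n−1, n} or 2 ≤ m ≤ i. -/

import Mathlib

open Submodule

/-- The rank of a vector `v ∈ L^n`: the `Fq`-dimension of the `Fq`-span of its entries. -/
noncomputable def rkVec (Fq : Type*) {L : Type*} [Field Fq] [Field L] [Algebra Fq L]
    {n : ℕ} (v : Fin n → L) : ℕ :=
  Module.finrank Fq ↥(Submodule.span Fq (Set.range v))

/-- The rank-metric lattice `L_i(n,m;q)`: subspaces of `L^n` spanned by their vectors of
rank at most `i`. -/
def RML (Fq L : Type*) [Field Fq] [Field L] [Algebra Fq L] (n i : ℕ) :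
    Set (Submodule L (Fin n → L)) :=
  {X | X = Submodule.span L {x | x ∈ X ∧ rkVec Fq x ≤ i}}

/-- The meet in the rank-metric lattice: span of the rank-`≤ i` vectors of the intersection. -/
def rmlMeet (Fq : Type*) {L : Type*} [Field Fq] [Field L] [Algebra Fq L] {n : ℕ} (i : ℕ)
    (X Y : Submodule L (Fin n → L)) : Submodule L (Fin n → L) :=
  Submodule.span L {x | x ∈ X ⊓ Y ∧ rkVec Fq x ≤ i}

/-- `X` is a modular element of the rank-metric lattice `L_i`. -/
def IsModularElt (Fq : Type*) {L : Type*} [Field Fq] [Field L] [Algebra Fq L] {n : ℕ} (i : ℕ)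
    (X : Submodule L (Fin n → L)) : Prop :=
  ∀ Y ∈ RML Fq L n i,
    Module.finrank L ↥(rmlMeet Fq i X Y) + Module.finrank L ↥(X ⊔ Y)
      = Module.finrank L ↥X + Module.finrank L ↥Y

/-- The rank-metric lattice `L_i(n,m;q)` is supersolvable: it has a maximal chain
(of length `n+1`, from `⊥` to `⊤`) consisting of modular elements. -/
def RMLSupersolvable (Fq L : Type*) [Field Fq] [Field L] [Algebra Fq L] (n i : ℕ) : Prop :=
  ∃ c : Fin (n + 1) → Submodule L (Fin n → L),
    StrictMono c ∧ c 0 = ⊥ ∧ c (Fin.last n) = ⊤ ∧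
      ∀ j, c j ∈ RML Fq L n i ∧ IsModularElt Fq i (c j)

set_option linter.unusedSectionVars false
set_option linter.unusedVariables false
set_option linter.unnecessarySimpa false
set_option maxHeartbeats 1000000

section Aux
variable {Fq L : Type*} [Field Fq] [Field L] [Algebra Fq L] {n : ℕ} [FiniteDimensional Fq L]

lemma rkVec_le_of_range_subset (v : Fin n → L) (W : Submodule Fq L)
    (h : Set.range v ⊆ W) : rkVec Fq v ≤ Module.finrank Fq W :=
  Submodule.finrank_mono (span_le.mpr h)

lemma rkVec_le_finrank (v : Fin n → L) : rkVec Fq v ≤ Module.finrank Fq L := by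
  simpa using rkVec_le_of_range_subset v ⊤ (by simp)

lemma rkVec_smul_le (v : Fin n → L) (a : L) : rkVec Fq (a • v) ≤ rkVec Fq v := by
  classical
  unfold rkVec
  have h : Set.range (a • v) ⊆ ↑((span Fq (Set.range v)).map (LinearMap.mulLeft Fq a)) := by
    rintro x ⟨k, rfl⟩
    exact ⟨v k, subset_span ⟨k, rfl⟩, by simp [Pi.smul_apply, Algebra.smul_def, mul_comm]⟩
  calc Module.finrank Fq ↥(span Fq (Set.range (a • v)))
      ≤ Module.finrank Fq ↥((span Fq (Set.range v)).map (LinearMap.mulLeft Fq a)) :=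
        Submodule.finrank_mono (span_le.mpr h)
    _ ≤ Module.finrank Fq ↥(span Fq (Set.range v)) := Submodule.finrank_map_le _ _

lemma rkVec_smul (v : Fin n → L) (a : L) (ha : a ≠ 0) :
    rkVec Fq (a • v) = rkVec Fq v := by
  refine le_antisymm (rkVec_smul_le v a) ?_
  have := rkVec_smul_le (Fq := Fq) (a • v) a⁻¹
  rwa [smul_smul, inv_mul_cancel₀ ha, one_smul] at this

lemma rkVec_zero : rkVec Fq (0 : Fin n → L) = 0 := by
  unfold rkVec
  have h0 : Set.range (0 : Fin n → L) ⊆ {0} := by rintro x ⟨k, rfl⟩; simp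
  have h : span Fq (Set.range (0 : Fin n → L)) ≤ ⊥ :=
    span_le.mpr (h0.trans (by simp : ({0} : Set L) ⊆ ↑(⊥ : Submodule Fq L)))
  rw [le_bot_iff.mp h]
  simp

lemma le_rkVec_of_linearIndependent {s : ℕ} (v : Fin n → L) (κ : Fin s → Fin n)
    (h : LinearIndependent Fq (v ∘ κ)) : s ≤ rkVec Fq v := by
  have h1 : span Fq (Set.range (v ∘ κ)) ≤ span Fq (Set.range v) :=
    span_mono (by rintro x ⟨j, rfl⟩; exact ⟨κ j, rfl⟩)
  have h2 := finrank_span_eq_card h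
  simp only [Fintype.card_fin] at h2
  calc s = Module.finrank Fq ↥(span Fq (Set.range (v ∘ κ))) := h2.symm
    _ ≤ rkVec Fq v := Submodule.finrank_mono h1

lemma rkVec_le_card_support (v : Fin n → L) (S : Finset (Fin n))
    (h : ∀ k, k ∉ S → v k = 0) : rkVec Fq v ≤ S.card := by
  classical
  have hr : Set.range v ⊆ ↑(span Fq (↑(S.image v) : Set L)) := by
    rintro x ⟨k, rfl⟩
    by_cases hk : k ∈ S
    · refine subset_span ?_
      simp only [Finset.coe_image, Set.mem_image, Finset.mem_coe]
      exact ⟨k, hk, rfl⟩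
    · rw [h k hk]; exact (span Fq _).zero_mem
  calc rkVec Fq v ≤ Module.finrank Fq ↥(span Fq (↑(S.image v) : Set L)) :=
        Submodule.finrank_mono (span_le.mpr hr)
    _ ≤ (S.image v).card := by
        simpa using finrank_span_le_card (R := Fq) (↑(S.image v) : Set L)
    _ ≤ S.card := Finset.card_image_le

end Aux

section Chain
variable (Fq : Type*) {L : Type*} [Field Fq] [Field L] [Algebra Fq L] {n : ℕ}
  [FiniteDimensional Fq L]

/-- coordinate flag -/
def Zf (L : Type*) [Field L] {n : ℕ} (j : Fin (n+1)) : Submodule L (Fin n → L) where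
  carrier := {x | ∀ k : Fin n, (j : ℕ) ≤ (k : ℕ) → x k = 0}
  add_mem' := by intro a b ha hb k hk; simp only [Pi.add_apply, ha k hk, hb k hk, add_zero]
  zero_mem' := by intro k hk; rfl
  smul_mem' := by intro c x hx k hk; simp only [Pi.smul_apply, hx k hk, smul_zero]

lemma mem_Zf {j : Fin (n+1)} {x : Fin n → L} :
    x ∈ Zf L j ↔ ∀ k : Fin n, (j : ℕ) ≤ (k : ℕ) → x k = 0 := Iff.rfl

lemma Zf_zero : Zf L (0 : Fin (n+1)) = ⊥ := by
  ext x
  simp only [mem_Zf, mem_bot]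
  constructor
  · intro h; funext k; exact h k (Nat.zero_le _)
  · rintro rfl; intro k _; rfl

lemma Zf_last : Zf L (Fin.last n) = ⊤ := by
  ext x
  simp only [mem_Zf, mem_top, iff_true, Fin.val_last]
  intro k hk
  exact absurd hk (not_le.mpr k.2)

lemma single_mem_Zf {j : Fin (n+1)} {k : Fin n} (h : (k : ℕ) < (j : ℕ)) (c : L) :
    Pi.single k c ∈ Zf L j := by
  intro k' hk'
  have hne : k' ≠ k := by rintro rfl; omega
  simp [Pi.single_apply, hne]

lemma Zf_strictMono : StrictMono (Zf L (n := n)) := by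
  intro j j' hjj'
  constructor
  · intro x hx k hk
    exact hx k (le_trans (le_of_lt hjj') hk)
  · intro hle
    have hjn : (j : ℕ) < n := lt_of_lt_of_le hjj' (Fin.is_le j')
    set k₀ : Fin n := ⟨(j : ℕ), hjn⟩
    have h1 : Pi.single k₀ (1 : L) ∈ Zf L j' := single_mem_Zf (by simpa [k₀] using hjj') 1
    have h2 := hle h1
    have h3 := h2 k₀ (by simp [k₀])
    simp at h3

lemma single_eq_smul (k : Fin n) (c : L) :
    (Pi.single k c : Fin n → L) = c • (Pi.single k 1 : Fin n → L) := by
  funext k'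
  simp [Pi.single_apply]

lemma sum_single_eq (x : Fin n → L) :
    ∑ k : Fin n, Pi.single k (x k) = x := Finset.univ_sum_single x

lemma Zf_le_span (j : Fin (n+1)) (S : Set (Fin n → L))
    (hS : ∀ k : Fin n, (k : ℕ) < (j : ℕ) → Pi.single k (1 : L) ∈ S) :
    Zf L j ≤ span L S := by
  classical
  intro x hx
  rw [← sum_single_eq x]
  refine Submodule.sum_mem _ (fun k _ => ?_)
  rw [single_eq_smul]
  by_cases hk : (k : ℕ) < (j : ℕ)
  · exact Submodule.smul_mem _ _ (subset_span (hS k hk))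
  · rw [hx k (not_lt.mp hk), zero_smul]; exact (span L S).zero_mem

lemma rkVec_single_le_one (k : Fin n) (c : L) : rkVec Fq (Pi.single k c) ≤ 1 := by
  classical
  have h := rkVec_le_card_support (Fq := Fq) (Pi.single k c) {k}
    (fun k' hk' => by
      simp only [Finset.mem_singleton] at hk'
      simp [Pi.single_apply, hk'])
  simpa using h

lemma rkVec_le_of_mem_Zf {j : Fin (n+1)} {x : Fin n → L} (hx : x ∈ Zf L j) :
    rkVec Fq x ≤ (j : ℕ) := by
  classical
  have h := rkVec_le_card_support (Fq := Fq) x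
    ((Finset.univ : Finset (Fin n)).filter (fun k : Fin n => (k : ℕ) < (j : ℕ)))
    (fun k hk => by
      simp only [Finset.mem_filter, Finset.mem_univ, true_and, not_lt] at hk
      exact hx k hk)
  refine le_trans h ?_
  have hle : (j : ℕ) ≤ n := Fin.is_le j
  have hsub : (Finset.univ : Finset (Fin n)).filter (fun k : Fin n => (k : ℕ) < (j : ℕ))
      ⊆ (Finset.univ : Finset (Fin (j : ℕ))).image (Fin.castLE hle) := by
    intro a ha
    simp only [Finset.mem_filter, Finset.mem_univ, true_and] at ha
    simp only [Finset.mem_image, Finset.mem_univ, true_and]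
    exact ⟨⟨(a : ℕ), ha⟩, by simp [Fin.castLE, Fin.ext_iff]⟩
  calc _ ≤ ((Finset.univ : Finset (Fin (j : ℕ))).image (Fin.castLE hle)).card :=
        Finset.card_le_card hsub
    _ ≤ (Finset.univ : Finset (Fin (j : ℕ))).card := Finset.card_image_le
    _ = (j : ℕ) := by simp

lemma Zf_mem_RML (i : ℕ) (hi : 1 ≤ i) (j : Fin (n+1)) : Zf L j ∈ RML Fq L n i := by
  refine le_antisymm ?_ ?_
  · exact Zf_le_span j _ (fun k hk =>
      ⟨single_mem_Zf hk 1, le_trans (rkVec_single_le_one Fq k 1) hi⟩)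
  · exact span_le.mpr (fun x hx => hx.1)

lemma Zf_finrank (j : Fin (n+1)) : Module.finrank L ↥(Zf L j) = (j : ℕ) := by
  classical
  have hle : (j : ℕ) ≤ n := Fin.is_le j
  set b : Fin (j : ℕ) → (Fin n → L) :=
    fun k => Pi.single (Fin.castLE hle k) (1 : L) with hb
  have hspan : Zf L j = span L (Set.range b) := by
    refine le_antisymm (Zf_le_span j _ (fun k hk => ?_)) (span_le.mpr ?_)
    · exact ⟨⟨(k : ℕ), hk⟩, by simp [hb, Fin.castLE, Fin.ext_iff]⟩
    · rintro x ⟨k, rfl⟩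
      refine single_mem_Zf ?_ 1
      simpa [Fin.castLE] using k.2
  have hind : LinearIndependent L b := by
    have h1 : LinearIndependent L (fun k : Fin n => Pi.single k (1 : L)) := by
      have := (Pi.basisFun L (Fin n)).linearIndependent
      convert this using 1
      funext k
      simp [Pi.basisFun_apply]
    exact h1.comp (Fin.castLE hle) (Fin.castLE_injective hle)
  rw [hspan, finrank_span_eq_card hind, Fintype.card_fin]

end Chain

section Modular
variable {Fq L : Type*} [Field Fq] [Field L] [Algebra Fq L] {n i : ℕ}
  [FiniteDimensional Fq L]

lemma modular_of_all_le (X : Submodule L (Fin n → L))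
    (hX : ∀ x ∈ X, rkVec Fq x ≤ i) : IsModularElt Fq i X := by
  intro Y hY
  have hmeet : rmlMeet Fq i X Y = X ⊓ Y := by
    refine le_antisymm (span_le.mpr fun x hx => hx.1) (fun x hx => subset_span ⟨hx, hX x hx.1⟩)
  rw [hmeet, add_comm, finrank_sup_add_finrank_inf_eq]

lemma modular_top : IsModularElt Fq i (⊤ : Submodule L (Fin n → L)) := by
  intro Y hY
  have hmeet : rmlMeet Fq i ⊤ Y = Y := by
    have hset : {x | x ∈ (⊤ : Submodule L (Fin n → L)) ⊓ Y ∧ rkVec Fq x ≤ i}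
        = {x | x ∈ Y ∧ rkVec Fq x ≤ i} := by
      ext x; simp [Submodule.mem_inf]
    rw [rmlMeet, hset, ← hY]
  rw [hmeet, top_sup_eq, add_comm]

lemma Zf_modular_of_le (j : Fin (n+1)) (hj : (j : ℕ) ≤ i) :
    IsModularElt Fq i (Zf L j) :=
  modular_of_all_le _ (fun x hx => le_trans (rkVec_le_of_mem_Zf (Fq := Fq) hx) hj)

lemma ss_of_easy (hi : 1 ≤ i)
    (hcase : i = n ∨ Module.finrank Fq L ≤ i ∨ i = n - 1) (hn : 1 ≤ n) :
    RMLSupersolvable Fq L n i := by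
  refine ⟨Zf L, Zf_strictMono, Zf_zero, Zf_last, fun j => ⟨Zf_mem_RML Fq i hi j, ?_⟩⟩
  rcases hcase with rfl | hm | hi'
  · exact Zf_modular_of_le j (Fin.is_le j)
  · exact modular_of_all_le _ (fun x _ => le_trans (rkVec_le_finrank x) hm)
  · by_cases hj : (j : ℕ) ≤ i
    · exact Zf_modular_of_le j hj
    · have hj' : (j : ℕ) = n := by omega
      have : j = Fin.last n := Fin.ext (by simpa using hj')
      rw [this, Zf_last]
      exact modular_top

end Modular

section BaseChange
variable {Fq L : Type*} [Field Fq] [Field L] [Algebra Fq L] {n : ℕ}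
  [FiniteDimensional Fq L]

/-- coordinatewise algebraMap -/
def phiV (Fq L : Type*) [Field Fq] [Field L] [Algebra Fq L] {ι : Type*} (a : ι → Fq) :
    ι → L := fun k => algebraMap Fq L (a k)

omit [FiniteDimensional Fq L] in
lemma phiV_add {ι : Type*} (a b : ι → Fq) :
    phiV Fq L (a + b) = phiV Fq L a + phiV Fq L b := by
  funext k; simp [phiV]

omit [FiniteDimensional Fq L] in
lemma phiV_smul {ι : Type*} (c : Fq) (a : ι → Fq) :
    phiV Fq L (c • a) = c • phiV Fq L a := by
  funext k; simp [phiV, Algebra.smul_def]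

omit [FiniteDimensional Fq L] in
lemma phiV_zero {ι : Type*} : phiV Fq L (0 : ι → Fq) = 0 := by
  funext k; simp [phiV]

/-- `phiV` as an `Fq`-linear map -/
def phiLM (Fq L : Type*) [Field Fq] [Field L] [Algebra Fq L] (ι : Type*) :
    (ι → Fq) →ₗ[Fq] (ι → L) where
  toFun := phiV Fq L
  map_add' := phiV_add
  map_smul' := phiV_smul

omit [FiniteDimensional Fq L] in
/-- Fq-linearly independent families of rational vectors stay independent over L -/
lemma keyLemma {ι : Type*} [Fintype ι] {d : ℕ} (s : Fin d → (ι → Fq))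
    (hs : LinearIndependent Fq s) :
    LinearIndependent L (fun t => phiV Fq L (s t)) := by
  classical
  set φ := algebraMap Fq L with hφ
  -- the Fq-linear combination map
  set f : (Fin d → Fq) →ₗ[Fq] (ι → Fq) :=
    { toFun := fun c => ∑ t, c t • s t
      map_add' := by
        intro a b
        simp [add_smul, Finset.sum_add_distrib]
      map_smul' := by
        intro c a
        simp [smul_smul, Finset.smul_sum] } with hf
  have hker : LinearMap.ker f = ⊥ := by
    rw [LinearMap.ker_eq_bot']
    intro c hc
    have := Fintype.linearIndependent_iff.mp hs c (by simpa [hf] using hc)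
    funext t; exact this t
  obtain ⟨g, hg⟩ := f.exists_leftInverse_of_injective hker
  have hgf : ∀ t, g (s t) = Pi.single t 1 := by
    intro t
    have h1 : f (Pi.single t 1) = s t := by
      simp only [hf, LinearMap.coe_mk, AddHom.coe_mk]
      rw [Finset.sum_eq_single t]
      · simp
      · intro t' _ ht'; simp [Pi.single_apply, ht']
      · intro h; exact absurd (Finset.mem_univ t) h
    have h2 := congrArg (fun h => h (Pi.single t (1 : Fq))) (congrArg (·.toFun) hg)
    rw [← h1]
    calc g (f (Pi.single t 1)) = (g ∘ₗ f) (Pi.single t 1) := rfl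
      _ = Pi.single t 1 := by rw [hg]; rfl
  set B := LinearMap.toMatrix' g with hB
  have hBy : ∀ (y : ι → Fq) (j : Fin d), ∑ k, B j k * y k = g y j := by
    intro y j
    have : B.mulVecLin y = g y := by rw [hB, ← Matrix.toLin'_apply', Matrix.toLin'_toMatrix']
    calc ∑ k, B j k * y k = B.mulVecLin y j := by
          simp [Matrix.mulVecLin_apply, Matrix.mulVec, dotProduct]
      _ = g y j := by rw [this]
  rw [Fintype.linearIndependent_iff]
  intro lam hlam j
  have H' : ∀ k, ∑ t, lam t * φ (s t k) = 0 := by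
    intro k
    have h := congrFun hlam k
    simpa [phiV, Finset.sum_apply, smul_eq_mul] using h
  have hcalc : lam j = 0 := by
    calc lam j = ∑ t, lam t * φ ((Pi.single t 1 : Fin d → Fq) j) := by
          rw [Finset.sum_eq_single j]
          · simp
          · intro t' _ ht'
            have hz : (Pi.single t' 1 : Fin d → Fq) j = 0 := by
              rw [Pi.single_apply]
              exact if_neg (fun h => ht' h.symm)
            rw [hz]; simp
          · intro h; exact absurd (Finset.mem_univ j) h
      _ = ∑ t, lam t * φ (g (s t) j) := by
          refine Finset.sum_congr rfl (fun t _ => ?_)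
          rw [hgf t]
      _ = ∑ t, lam t * φ (∑ k, B j k * s t k) := by
          refine Finset.sum_congr rfl (fun t _ => ?_)
          rw [hBy (s t) j]
      _ = ∑ t, ∑ k, lam t * (φ (B j k) * φ (s t k)) := by
          refine Finset.sum_congr rfl (fun t _ => ?_)
          rw [map_sum, Finset.mul_sum]
          refine Finset.sum_congr rfl (fun k _ => ?_)
          rw [map_mul]
      _ = ∑ k, φ (B j k) * ∑ t, lam t * φ (s t k) := by
          rw [Finset.sum_comm]
          refine Finset.sum_congr rfl (fun k _ => ?_)
          rw [Finset.mul_sum]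
          refine Finset.sum_congr rfl (fun t _ => ?_)
          ring
      _ = 0 := by
          refine Finset.sum_eq_zero (fun k _ => ?_)
          rw [H' k, mul_zero]
  exact hcalc

end BaseChange

section RankOne
variable {Fq L : Type*} [Field Fq] [Field L] [Algebra Fq L] {n : ℕ}
  [FiniteDimensional Fq L]

lemma rkVec_phiV_le_one (a : Fin n → Fq) : rkVec Fq (phiV Fq L a) ≤ 1 := by
  have h := rkVec_le_of_range_subset (phiV Fq L a) (span Fq {(1 : L)})
    (by
      rintro x ⟨k, rfl⟩
      have : phiV Fq L a k = a k • (1 : L) := by simp [phiV, Algebra.smul_def]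
      rw [this]
      exact Submodule.smul_mem _ _ (subset_span rfl))
  simpa [finrank_span_singleton (one_ne_zero (α := L))] using h

lemma rk_le_one_struct (x : Fin n → L) (hx : rkVec Fq x ≤ 1) :
    ∃ (μ : L) (a : Fin n → Fq), x = μ • phiV Fq L a := by
  classical
  by_cases hx0 : x = 0
  · exact ⟨0, 0, by simp [hx0]⟩
  · have hk0 : ∃ k0, x k0 ≠ 0 := by
      by_contra h
      push_neg at h
      exact hx0 (funext h)
    obtain ⟨k0, hk0⟩ := hk0
    have hle : span Fq {x k0} ≤ span Fq (Set.range x) :=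
      span_mono (by rintro y rfl; exact ⟨k0, rfl⟩)
    have heq : span Fq {x k0} = span Fq (Set.range x) :=
      Submodule.eq_of_le_of_finrank_le hle
        (le_trans hx (by rw [finrank_span_singleton hk0]))
    have hmem : ∀ k, ∃ c : Fq, c • x k0 = x k := by
      intro k
      have : x k ∈ span Fq {x k0} := heq ▸ subset_span ⟨k, rfl⟩
      exact mem_span_singleton.mp this
    refine ⟨x k0, fun k => (hmem k).choose, funext fun k => Eq.symm ?_⟩
    have := (hmem k).choose_spec
    rw [Pi.smul_apply]
    calc x k0 • phiV Fq L (fun k => (hmem k).choose) k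
        = x k0 * algebraMap Fq L ((hmem k).choose) := by simp [phiV, Algebra.smul_def]
      _ = (hmem k).choose • x k0 := by rw [Algebra.smul_def]; ring
      _ = x k := this

/-- the rational points of a subspace -/
def Wq (Fq : Type*) {L : Type*} [Field Fq] [Field L] [Algebra Fq L] {n : ℕ}
    (Y : Submodule L (Fin n → L)) : Submodule Fq (Fin n → Fq) where
  carrier := {a | phiV Fq L a ∈ Y}
  add_mem' := by
    intro a b ha hb
    simp only [Set.mem_setOf_eq] at *
    rw [phiV_add]
    exact Y.add_mem ha hb
  zero_mem' := by
    simp only [Set.mem_setOf_eq, phiV_zero]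
    exact Y.zero_mem
  smul_mem' := by
    intro c a ha
    simp only [Set.mem_setOf_eq] at *
    rw [phiV_smul, ← algebraMap_smul L c (phiV Fq L a)]
    exact Y.smul_mem _ ha

lemma mem_RML_one_eq {Y : Submodule L (Fin n → L)} (hY : Y ∈ RML Fq L n 1) :
    Y = span L (phiV Fq L '' ↑(Wq Fq Y)) := by
  refine le_antisymm ?_ (span_le.mpr ?_)
  · conv_lhs => rw [hY]
    refine span_le.mpr ?_
    rintro x ⟨hxY, hxr⟩
    obtain ⟨μ, a, rfl⟩ := rk_le_one_struct x hxr
    by_cases hμ : μ = 0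
    · rw [hμ, zero_smul]; exact (span L _).zero_mem
    · have haY : phiV Fq L a ∈ Y := by
        have : phiV Fq L a = μ⁻¹ • (μ • phiV Fq L a) := by
          rw [smul_smul, inv_mul_cancel₀ hμ, one_smul]
        rw [this]
        exact Y.smul_mem _ hxY
      exact Submodule.smul_mem _ _ (subset_span ⟨a, haY, rfl⟩)
  · rintro x ⟨a, ha, rfl⟩
    exact ha

lemma span_phiV_le_Zf {j : Fin (n+1)} {P : Submodule Fq (Fin n → Fq)}
    (hP : P ≤ Zf Fq j) : span L (phiV Fq L '' ↑P) ≤ Zf L j := by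
  refine span_le.mpr ?_
  rintro x ⟨p, hp, rfl⟩
  intro k hk
  have : p k = 0 := hP hp k hk
  simp [phiV, this]

lemma meet_lemma (j : Fin (n+1)) (W : Submodule Fq (Fin n → Fq)) :
    Zf L j ⊓ span L (phiV Fq L '' ↑W) ≤ span L (phiV Fq L '' ↑(W ⊓ Zf Fq j)) := by
  classical
  set P : Submodule Fq (Fin n → Fq) := W ⊓ Zf Fq j with hPdef
  obtain ⟨Q', hQ'⟩ := Submodule.exists_isCompl (P.comap W.subtype)
  set Q : Submodule Fq (Fin n → Fq) := Q'.map W.subtype with hQdef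
  have hPW : P ≤ W := inf_le_left
  have hmapP : (P.comap W.subtype).map W.subtype = P := by
    rw [Submodule.map_comap_subtype]
    exact inf_eq_right.mpr hPW
  have hQW : Q ≤ W := by
    rw [hQdef]
    rintro x ⟨y, _, rfl⟩
    exact y.2
  have hsup : P ⊔ Q = W := by
    rw [← hmapP, hQdef, ← Submodule.map_sup, hQ'.sup_eq_top, Submodule.map_top,
      Submodule.range_subtype]
  have hinf : P ⊓ Q = ⊥ := by
    rw [← hmapP, hQdef, ← Submodule.map_inf _ (Submodule.injective_subtype W),
      hQ'.inf_eq_bot, Submodule.map_bot]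
  -- a basis of Q
  set e := Module.finrank Fq ↥Q with he
  set r : Fin e → (Fin n → Fq) := fun t => ((Module.finBasis Fq ↥Q) t : Fin n → Fq) with hr
  have hr_ind : LinearIndependent Fq r :=
    (Module.finBasis Fq ↥Q).linearIndependent.map' Q.subtype (Submodule.ker_subtype Q)
  have hr_mem : ∀ t, r t ∈ Q := fun t => ((Module.finBasis Fq ↥Q) t).2
  have hr_span : span Fq (Set.range r) = Q := by
    rw [hr]
    have : (fun t => ((Module.finBasis Fq ↥Q) t : Fin n → Fq))
        = Q.subtype ∘ (Module.finBasis Fq ↥Q) := rfl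
    rw [this, Set.range_comp, ← Submodule.map_span, Module.Basis.span_eq, Submodule.map_top,
      Submodule.range_subtype]
  intro x hx
  obtain ⟨hxZ, hxW⟩ := hx
  -- split the span
  have hsplit : span L (phiV Fq L '' (W : Set (Fin n → Fq))) ≤
      span L (phiV Fq L '' (P : Set (Fin n → Fq))) ⊔
      span L (phiV Fq L '' (Q : Set (Fin n → Fq))) := by
    refine span_le.mpr ?_
    rintro y ⟨w, hw, rfl⟩
    rw [← hsup] at hw
    obtain ⟨p, hp, q0, hq0, rfl⟩ := Submodule.mem_sup.mp hw
    rw [phiV_add]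
    exact Submodule.add_mem_sup (subset_span ⟨p, hp, rfl⟩) (subset_span ⟨q0, hq0, rfl⟩)
  obtain ⟨y, hy, z, hz, hyz⟩ := Submodule.mem_sup.mp (hsplit hxW)
  have hyZ : y ∈ Zf L j := span_phiV_le_Zf (inf_le_right (a := W)) hy
  have hzZ : z ∈ Zf L j := by
    have hzxy : z = x - y := by rw [← hyz]; ring
    rw [hzxy]
    exact Submodule.sub_mem _ hxZ hyZ
  have hQr : span L (phiV Fq L '' (Q : Set (Fin n → Fq))) ≤ span L (Set.range (fun t => phiV Fq L (r t))) := by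
    refine span_le.mpr ?_
    rintro y' ⟨q, hq, rfl⟩
    rw [← hr_span] at hq
    obtain ⟨c, hc⟩ := (mem_span_range_iff_exists_fun Fq).mp hq
    rw [← hc]
    have hphi : phiV Fq L (∑ t, c t • r t) = ∑ t, c t • phiV Fq L (r t) := by
      have h1 : phiV Fq L (∑ t, c t • r t) = phiLM Fq L (Fin n) (∑ t, c t • r t) := rfl
      rw [h1, map_sum]
      refine Finset.sum_congr rfl (fun t _ => ?_)
      rw [map_smul]
      rfl
    rw [hphi]
    refine Submodule.sum_mem _ (fun t _ => ?_)
    rw [← algebraMap_smul L (c t) (phiV Fq L (r t))]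
    exact Submodule.smul_mem _ _ (subset_span ⟨t, rfl⟩)
  obtain ⟨lam, hlam⟩ := (mem_span_range_iff_exists_fun L).mp (hQr hz)
  have hπ_ind : LinearIndependent Fq
      (fun t (k : {k : Fin n // (j : ℕ) ≤ (k : ℕ)}) => r t k.1) := by
    rw [Fintype.linearIndependent_iff]
    intro c hc
    have hsum_mem_Q : (∑ t, c t • r t) ∈ Q :=
      Submodule.sum_mem _ (fun t _ => Q.smul_mem _ (hr_mem t))
    have hsum_mem_Z : (∑ t, c t • r t) ∈ Zf Fq j := by
      intro k hk
      have h := congrFun hc ⟨k, hk⟩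
      simpa [Finset.sum_apply] using h
    have hmem : (∑ t, c t • r t) ∈ P ⊓ Q :=
      ⟨⟨hQW hsum_mem_Q, hsum_mem_Z⟩, hsum_mem_Q⟩
    rw [hinf, Submodule.mem_bot] at hmem
    exact Fintype.linearIndependent_iff.mp hr_ind c hmem
  have hκ_ind := keyLemma (L := L)
    (fun t (k : {k : Fin n // (j : ℕ) ≤ (k : ℕ)}) => r t k.1) hπ_ind
  have hlam0 : ∀ t, lam t = 0 := by
    refine Fintype.linearIndependent_iff.mp hκ_ind lam ?_
    funext k
    have h1 := congrFun hlam k.1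
    have h2 : z k.1 = 0 := hzZ k.1 k.2
    simp only [Finset.sum_apply, Pi.smul_apply, phiV, smul_eq_mul] at h1 ⊢
    simp only [Pi.zero_apply]
    rw [h1, h2]
  have hz0 : z = 0 := by
    rw [← hlam]
    refine Finset.sum_eq_zero (fun t _ => ?_)
    rw [hlam0 t, zero_smul]
  have hxy : x = y := by rw [← hyz, hz0, add_zero]
  rw [hxy]
  exact hy

lemma Zf_modular_one (j : Fin (n+1)) : IsModularElt Fq 1 (Zf L j) := by
  intro Y hY
  have hYW := mem_RML_one_eq hY
  have hmeet : rmlMeet Fq 1 (Zf L j) Y = Zf L j ⊓ Y := by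
    refine le_antisymm (span_le.mpr fun x hx => hx.1) ?_
    intro x hx
    have hx' : x ∈ Zf L j ⊓ span L (phiV Fq L '' ↑(Wq Fq Y)) := by
      rwa [← hYW]
    have hle : span L (phiV Fq L '' ↑(Wq Fq Y ⊓ Zf Fq j)) ≤ rmlMeet Fq 1 (Zf L j) Y := by
      refine span_le.mpr ?_
      rintro x' ⟨a, ha, rfl⟩
      refine subset_span ⟨⟨?_, ?_⟩, rkVec_phiV_le_one a⟩
      · intro k hk
        simp [phiV, ha.2 k hk]
      · exact ha.1
    exact hle (meet_lemma j (Wq Fq Y) hx')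
  rw [hmeet, add_comm, finrank_sup_add_finrank_inf_eq]

end RankOne

section Counting
variable {Fq L : Type*} [Field Fq] [Field L] [Algebra Fq L] [Fintype Fq]
  [FiniteDimensional Fq L]

lemma exists_indep_family (s : ℕ) (hs : s ≤ Module.finrank Fq L) :
    ∃ b : Fin s → L, LinearIndependent Fq b := by
  have B := Module.finBasis Fq L
  exact ⟨fun j => B (Fin.castLE hs j), B.linearIndependent.comp _ (Fin.castLE_injective hs)⟩

lemma exists_indep_family_one (s : ℕ) (hs : s + 1 ≤ Module.finrank Fq L) :
    ∃ h : Fin (s + 1) → L, LinearIndependent Fq h ∧ h 0 = 1 := by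
  induction s with
  | zero =>
    refine ⟨fun _ => 1, ?_, rfl⟩
    haveI : Unique (Fin (0 + 1)) := inferInstanceAs (Unique (Fin 1))
    exact linearIndependent_unique_iff.mpr (one_ne_zero)
  | succ s ih =>
    obtain ⟨h, hind, h0⟩ := ih (by omega)
    have hfr : Module.finrank Fq ↥(span Fq (Set.range h)) = s + 1 := by
      rw [finrank_span_eq_card hind, Fintype.card_fin]
    have hex : ∃ x : L, x ∉ span Fq (Set.range h) := by
      by_contra hc
      push_neg at hc
      have : span Fq (Set.range h) = ⊤ := eq_top_iff.mpr (fun x _ => hc x)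
      rw [this, finrank_top] at hfr
      omega
    obtain ⟨x, hx⟩ := hex
    refine ⟨Fin.snoc h x, linearIndependent_fin_snoc.mpr ⟨hind, hx⟩, ?_⟩
    have : (0 : Fin (s + 2)) = Fin.castSucc 0 := rfl
    rw [this, Fin.snoc_castSucc, h0]

lemma card_le_card_L (s : ℕ) (hs : s ≤ Module.finrank Fq L) [Fintype L] :
    Fintype.card Fq ^ s ≤ Fintype.card L := by
  obtain ⟨β, hβ⟩ := exists_indep_family (Fq := Fq) (L := L) s hs
  have hinj : Function.Injective (fun c : Fin s → Fq => ∑ j, c j • β j) := by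
    intro c c' h
    simp only at h
    funext j
    have hsub : ∑ j, (c j - c' j) • β j = 0 := by
      simp only [sub_smul, Finset.sum_sub_distrib, h, sub_self]
    have := Fintype.linearIndependent_iff.mp hβ _ hsub j
    exact sub_eq_zero.mp this
  calc Fintype.card Fq ^ s = Fintype.card (Fin s → Fq) := by
        rw [Fintype.card_fun, Fintype.card_fin]
    _ ≤ Fintype.card L := Fintype.card_le_of_injective _ hinj

lemma lemmaJ {r : ℕ} (hr : r + 2 ≤ Module.finrank Fq L) (b : Fin r → L) (ω ψ0 : L)
    (Hdeg : ∀ (a : Fin r → Fq) (a_t a_ψ : Fq),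
      algebraMap Fq L a_t + algebraMap Fq L a_ψ * ω = 0 →
      (∑ j, algebraMap Fq L (a j) * b j) + algebraMap Fq L a_ψ * ψ0 = 0 →
      a = 0 ∧ a_t = 0 ∧ a_ψ = 0) :
    ∃ t : L, LinearIndependent Fq
      (Fin.snoc (Fin.snoc b t) (ψ0 + ω * t) : Fin (r + 2) → L) := by
  classical
  have hFin : Finite L := Module.finite_of_finite Fq
  have : Fintype L := Fintype.ofFinite L
  set φ := algebraMap Fq L with hφ
  set κf : ((Fin r → Fq) × Fq × Fq) → L := fun p => φ p.2.1 + φ p.2.2 * ω with hκf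
  set rhs : ((Fin r → Fq) × Fq × Fq) → L :=
    fun p => -((∑ j, φ (p.1 j) * b j) + φ p.2.2 * ψ0) with hrhs
  set tbad : ((Fin r → Fq) × Fq × Fq) → L := fun p => (κf p)⁻¹ * rhs p with htbad
  set S : Finset L := Finset.image tbad (Finset.univ.erase (0, 0, 0)) with hS
  have hqpos : 0 < Fintype.card Fq := Fintype.card_pos
  have hcardS : S.card < Fintype.card L := by
    have h1 : S.card ≤ (Finset.univ.erase ((0, 0, 0) : (Fin r → Fq) × Fq × Fq)).card :=
      Finset.card_image_le
    have h2 : (Finset.univ.erase ((0, 0, 0) : (Fin r → Fq) × Fq × Fq)).card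
        = Fintype.card ((Fin r → Fq) × Fq × Fq) - 1 := by
      rw [Finset.card_erase_of_mem (Finset.mem_univ _), Finset.card_univ]
    have h3 : Fintype.card ((Fin r → Fq) × Fq × Fq) = Fintype.card Fq ^ (r + 2) := by
      rw [Fintype.card_prod, Fintype.card_prod, Fintype.card_fun, Fintype.card_fin]
      ring
    have h4 : Fintype.card Fq ^ (r + 2) ≤ Fintype.card L := card_le_card_L _ hr
    have h5 : 0 < Fintype.card Fq ^ (r + 2) := pow_pos hqpos _
    omega
  have hex : ∃ t : L, t ∉ S := by
    have hcompl : 0 < Sᶜ.card := by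
      rw [Finset.card_compl]
      omega
    obtain ⟨t, ht⟩ := Finset.card_pos.mp hcompl
    exact ⟨t, Finset.mem_compl.mp ht⟩
  obtain ⟨t, htS⟩ := hex
  refine ⟨t, ?_⟩
  rw [Fintype.linearIndependent_iff]
  intro g hg
  set a : Fin r → Fq := fun j => g j.castSucc.castSucc with ha
  set a_t : Fq := g (Fin.last r).castSucc with hat
  set a_ψ : Fq := g (Fin.last (r + 1)) with haψ
  have hsum : (∑ j, φ (a j) * b j) + φ a_t * t + φ a_ψ * (ψ0 + ω * t) = 0 := by
    rw [Fin.sum_univ_castSucc] at hg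
    simp only [Fin.snoc_last] at hg
    rw [Fin.sum_univ_castSucc] at hg
    simp only [Fin.snoc_castSucc, Fin.snoc_last] at hg
    calc (∑ j, φ (a j) * b j) + φ a_t * t + φ a_ψ * (ψ0 + ω * t)
        = (∑ j, g j.castSucc.castSucc • b j) + g (Fin.last r).castSucc • t
          + g (Fin.last (r + 1)) • (ψ0 + ω * t) := by
          rw [ha, hat, haψ]
          simp only [Algebra.smul_def, hφ]
      _ = 0 := hg
  by_cases hκ : φ a_t + φ a_ψ * ω = 0
  · have h2 : (∑ j, φ (a j) * b j) + φ a_ψ * ψ0 = 0 := by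
      have hexp : (φ a_t + φ a_ψ * ω) * t = 0 := by rw [hκ, zero_mul]
      linear_combination hsum - hexp
    obtain ⟨ha0, hat0, haψ0⟩ := Hdeg a a_t a_ψ hκ h2
    intro k
    refine Fin.lastCases ?_ (fun k' => ?_) k
    · exact haψ0
    · refine Fin.lastCases ?_ (fun j => ?_) k'
      · exact hat0
      · exact congrFun ha0 j
  · exfalso
    have hp0 : ((a, a_t, a_ψ) : (Fin r → Fq) × Fq × Fq) ≠ (0, 0, 0) := by
      intro h
      apply hκ
      have h1 : a_t = 0 := by
        have := congrArg (fun p => p.2.1) h; simpa using this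
      have h2 : a_ψ = 0 := by
        have := congrArg (fun p => p.2.2) h; simpa using this
      rw [h1, h2]
      simp
    have hteq : t = tbad (a, a_t, a_ψ) := by
      have hre : (φ a_t + φ a_ψ * ω) * t
          = -((∑ j, φ (a j) * b j) + φ a_ψ * ψ0) := by
        linear_combination hsum
      rw [htbad]
      simp only [hκf, hrhs]
      rw [← hre, inv_mul_cancel_left₀ hκ]
    exact htS (hteq ▸ Finset.mem_image_of_mem tbad
      (Finset.mem_erase.mpr ⟨hp0, Finset.mem_univ _⟩))

end Counting

section Construct
variable {Fq L : Type*} [Field Fq] [Field L] [Algebra Fq L] {n : ℕ}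
  [Fintype Fq] [FiniteDimensional Fq L]

/-- a vector built out of standard basis vectors -/
noncomputable def mkv (L : Type*) [Field L] {n s : ℕ} (c : Fin s → L) (p : Fin s → Fin n) :
    Fin n → L :=
  ∑ j, c j • (Pi.single (p j) 1 : Fin n → L)

omit [Fintype Fq] [FiniteDimensional Fq L] in
lemma mkv_apply_eq {s : ℕ} (c : Fin s → L) (p : Fin s → Fin n)
    (hp : Function.Injective p) (j' : Fin s) : mkv L c p (p j') = c j' := by
  classical
  rw [mkv, Finset.sum_apply]
  rw [Finset.sum_eq_single j']
  · simp
  · intro j _ hj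
    have : p j ≠ p j' := fun h => hj (hp h)
    simp [Pi.single_apply, this]
  · intro h; exact absurd (Finset.mem_univ j') h

omit [Fintype Fq] [FiniteDimensional Fq L] in
lemma mkv_apply_ne {s : ℕ} (c : Fin s → L) (p : Fin s → Fin n) (k : Fin n)
    (hk : ∀ j, p j ≠ k) : mkv L c p k = 0 := by
  classical
  rw [mkv, Finset.sum_apply]
  refine Finset.sum_eq_zero (fun j _ => ?_)
  have : k ≠ p j := fun h => hk j h.symm
  simp [Pi.single_apply, this]

omit [Fintype Fq] [FiniteDimensional Fq L] in
lemma u_mkv (u : (Fin n → L) →ₗ[L] L) {s : ℕ} (c : Fin s → L) (p : Fin s → Fin n) :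
    u (mkv L c p) = ∑ j, c j * u (Pi.single (p j) 1) := by
  rw [mkv, map_sum]
  refine Finset.sum_congr rfl (fun j _ => ?_)
  rw [map_smul, smul_eq_mul]

omit [Fintype Fq] in
lemma rkVec_mkv_le {s : ℕ} (c : Fin s → L) (p : Fin s → Fin n) :
    rkVec Fq (mkv L c p) ≤ s := by
  classical
  have h := rkVec_le_card_support (Fq := Fq) (mkv L c p) (Finset.image p Finset.univ)
    (fun k hk => by
      refine mkv_apply_ne c p k (fun j hj => ?_)
      exact hk (hj ▸ Finset.mem_image_of_mem p (Finset.mem_univ j)))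
  calc rkVec Fq (mkv L c p) ≤ (Finset.image p Finset.univ).card := h
    _ ≤ (Finset.univ : Finset (Fin s)).card := Finset.card_image_le
    _ = s := by simp

end Construct

section Forward
variable {Fq L : Type*} [Field Fq] [Field L] [Algebra Fq L] {n i : ℕ}
  [Fintype Fq] [FiniteDimensional Fq L]

omit [Fintype Fq] [FiniteDimensional Fq L] in
lemma chain_finrank (c : Fin (n + 1) → Submodule L (Fin n → L)) (hmono : StrictMono c)
    (h0 : c 0 = ⊥) (hlast : c (Fin.last n) = ⊤) (j : Fin (n + 1)) :
    Module.finrank L ↥(c j) = (j : ℕ) := by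
  set f : Fin (n + 1) → ℕ := fun j => Module.finrank L ↥(c j) with hf
  have hfmono : StrictMono f := fun a b hab => finrank_lt_finrank_of_lt (hmono hab)
  have hlast' : f (Fin.last n) = n := by
    show Module.finrank L ↥(c (Fin.last n)) = n
    rw [hlast, finrank_top, Module.finrank_fintype_fun_eq_card, Fintype.card_fin]
  have h0' : f 0 = 0 := by
    show Module.finrank L ↥(c 0) = 0
    rw [h0, finrank_bot]
  have h1 : ∀ k : ℕ, ∀ hk : k ≤ n, k ≤ f ⟨k, Nat.lt_succ_of_le hk⟩ := by
    intro k
    induction k with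
    | zero => intro hk; exact Nat.zero_le _
    | succ k ih =>
      intro hk
      have hk' : k ≤ n := by omega
      have hlt : f ⟨k, Nat.lt_succ_of_le hk'⟩ < f ⟨k + 1, Nat.lt_succ_of_le hk⟩ :=
        hfmono (by simp [Fin.lt_def])
      have := ih hk'
      omega
  have h2 : ∀ k : ℕ, k ≤ n → f ⟨n - k, Nat.lt_succ_of_le (Nat.sub_le n k)⟩ ≤ n - k := by
    intro k
    induction k with
    | zero =>
      intro hk
      have heq0 : (⟨n - 0, Nat.lt_succ_of_le (Nat.sub_le n 0)⟩ : Fin (n + 1)) = Fin.last n :=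
        Fin.ext (by simp)
      rw [heq0, hlast']
      omega
    | succ k ih =>
      intro hk
      have hk' : k ≤ n := by omega
      have hlt : f ⟨n - (k + 1), Nat.lt_succ_of_le (Nat.sub_le n (k + 1))⟩ < f ⟨n - k, Nat.lt_succ_of_le (Nat.sub_le n k)⟩ :=
        hfmono (by simp [Fin.lt_def]; omega)
      have := ih hk'
      omega
  have hj : (j : ℕ) ≤ n := Fin.is_le j
  have hup := h1 (j : ℕ) hj
  have hdn := h2 (n - (j : ℕ)) (Nat.sub_le n _)
  have hidx : (⟨n - (n - (j : ℕ)), Nat.lt_succ_of_le (Nat.sub_le n _)⟩ : Fin (n + 1)) = j :=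
    Fin.ext (by simp; omega)
  have hidx2 : (⟨(j : ℕ), Nat.lt_succ_of_le hj⟩ : Fin (n + 1)) = j := Fin.ext rfl
  rw [hidx] at hdn
  rw [hidx2] at hup
  have : n - (n - (j : ℕ)) = (j : ℕ) := by omega
  rw [this] at hdn
  exact le_antisymm hdn hup

omit [Fintype Fq] [FiniteDimensional Fq L] in
lemma exists_functional (X : Submodule L (Fin n → L)) (hn : 1 ≤ n)
    (hfr : Module.finrank L ↥X = n - 1) :
    ∃ u : (Fin n → L) →ₗ[L] L, LinearMap.ker u = X := by
  have hq : Module.finrank L ((Fin n → L) ⧸ X) = 1 := by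
    have := Submodule.finrank_quotient_add_finrank X
    rw [hfr, Module.finrank_fintype_fun_eq_card, Fintype.card_fin] at this
    omega
  have e : ((Fin n → L) ⧸ X) ≃ₗ[L] L :=
    LinearEquiv.ofFinrankEq _ _ (by rw [hq, Module.finrank_self])
  refine ⟨e.toLinearMap ∘ₗ X.mkQ, ?_⟩
  rw [LinearMap.ker_comp, LinearEquiv.ker, Submodule.comap_bot, Submodule.ker_mkQ]

lemma coatom_contra (hn2 : 2 ≤ n)
    (X : Submodule L (Fin n → L)) (hmod : IsModularElt Fq i X)
    (hfr : Module.finrank L ↥X = n - 1)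
    (u : (Fin n → L) →ₗ[L] L) (hker : LinearMap.ker u = X)
    (v w : Fin n → L) (hv : rkVec Fq v ≤ i) (hw : rkVec Fq w ≤ i)
    (huv : u v = 1) (huw : u w = 1) (hz : i + 1 ≤ rkVec Fq (v - w)) : False := by
  classical
  set z := v - w with hzdef
  have hz0 : z ≠ 0 := by
    intro h
    rw [h, rkVec_zero] at hz
    omega
  have hvw_indep : LinearIndependent L ![v, w] := by
    rw [LinearIndependent.pair_iff]
    intro s t hst
    have h1 : s + t = 0 := by
      have h := congrArg u hst
      simpa [map_add, map_smul, huv, huw] using h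
    have ht : t = -s := by
      have : t = 0 - s := by rw [← h1]; ring
      simpa using this
    have h2 : s • z = 0 := by
      rw [hzdef, smul_sub, ← hst, ht]
      ring_nf
      rw [neg_smul]
      ring_nf
    have hs0 : s = 0 := by
      rcases smul_eq_zero.mp h2 with hs | hz'
      · exact hs
      · exact absurd hz' hz0
    exact ⟨hs0, by rw [ht, hs0, neg_zero]⟩
  set Y : Submodule L (Fin n → L) := span L (Set.range ![v, w]) with hY
  have hvY : v ∈ Y := subset_span ⟨0, rfl⟩
  have hwY : w ∈ Y := subset_span ⟨1, rfl⟩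
  have hYfr : Module.finrank L ↥Y = 2 := by
    rw [hY, finrank_span_eq_card hvw_indep]
    simp
  have hYRML : Y ∈ RML Fq L n i := by
    refine le_antisymm ?_ (span_le.mpr fun x hx => hx.1)
    rw [hY]
    refine span_le.mpr ?_
    rintro x ⟨j, rfl⟩
    refine subset_span ?_
    fin_cases j
    · exact ⟨hvY, by simpa using hv⟩
    · exact ⟨hwY, by simpa using hw⟩
  have hvX : v ∉ X := by
    intro h
    rw [← hker] at h
    rw [LinearMap.mem_ker.mp h] at huv
    exact zero_ne_one huv
  have hzX : z ∈ X := by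
    rw [← hker, LinearMap.mem_ker, hzdef, map_sub, huv, huw, sub_self]
  have hzY : z ∈ Y := Submodule.sub_mem _ hvY hwY
  have hfrn : Module.finrank L (Fin n → L) = n := by
    rw [Module.finrank_fintype_fun_eq_card, Fintype.card_fin]
  have hXY_top : X ⊔ Y = ⊤ := by
    have hlt : X < X ⊔ Y := by
      refine lt_of_le_of_ne le_sup_left (fun h => hvX ?_)
      rw [h]
      exact Submodule.mem_sup_right hvY
    have hgt : n - 1 < Module.finrank L ↥(X ⊔ Y) := by
      have h := finrank_lt_finrank_of_lt hlt
      rwa [hfr] at h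
    have hle : Module.finrank L ↥(X ⊔ Y) ≤ n := by
      have h := Submodule.finrank_le (X ⊔ Y)
      rwa [hfrn] at h
    refine eq_top_of_finrank_eq ?_
    rw [hfrn]
    omega
  have hformula := finrank_sup_add_finrank_inf_eq X Y
  rw [hXY_top, finrank_top, hfrn, hfr, hYfr] at hformula
  have hinf : Module.finrank L ↥(X ⊓ Y) = 1 := by omega
  have hmodY := hmod Y hYRML
  rw [hXY_top, finrank_top, hfrn, hfr, hYfr] at hmodY
  have hmeetfr : Module.finrank L ↥(rmlMeet Fq i X Y) = 1 := by omega
  have hspan_z : span L {z} = X ⊓ Y := by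
    refine Submodule.eq_of_le_of_finrank_le ?_ ?_
    · rw [span_le, Set.singleton_subset_iff]
      exact ⟨hzX, hzY⟩
    · rw [hinf, finrank_span_singleton hz0]
  have hne : ∃ x, (x ∈ X ⊓ Y ∧ rkVec Fq x ≤ i) ∧ x ≠ 0 := by
    by_contra hcon
    push_neg at hcon
    have hsub : {x | x ∈ X ⊓ Y ∧ rkVec Fq x ≤ i} ⊆ ↑(⊥ : Submodule L (Fin n → L)) := by
      intro x hx
      simp only [SetLike.mem_coe, Submodule.mem_bot]
      exact hcon x hx
    have : rmlMeet Fq i X Y ≤ ⊥ := span_le.mpr hsub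
    rw [le_bot_iff.mp this] at hmeetfr
    simp at hmeetfr
  obtain ⟨x, ⟨hxXY, hxrk⟩, hx0⟩ := hne
  have hxz : x ∈ span L {z} := hspan_z ▸ hxXY
  obtain ⟨lam, hlam⟩ := mem_span_singleton.mp hxz
  have hlam0 : lam ≠ 0 := by rintro rfl; rw [zero_smul] at hlam; exact hx0 hlam.symm
  have : rkVec Fq x = rkVec Fq z := by rw [← hlam, rkVec_smul z lam hlam0]
  omega

end Forward

section Construct2
variable {Fq L : Type*} [Field Fq] [Field L] [Algebra Fq L] {n : ℕ}
  [Fintype Fq] [FiniteDimensional Fq L]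

omit [Fintype Fq] [FiniteDimensional Fq L] in
lemma mkv_mem_of_coeffs {s : ℕ} (c : Fin s → L) (p : Fin s → Fin n)
    (W : Submodule Fq L) (hc : ∀ j, c j ∈ W) (k : Fin n) : mkv L c p k ∈ W := by
  classical
  rw [mkv, Finset.sum_apply]
  refine Submodule.sum_mem _ (fun j _ => ?_)
  simp only [Pi.smul_apply, smul_eq_mul, Pi.single_apply]
  by_cases h : k = p j
  · simpa [h] using hc j
  · rw [if_neg h, mul_zero]
    exact W.zero_mem

lemma finrank_span_pair_le (x y : L) :
    Module.finrank Fq ↥(span Fq ({x, y} : Set L)) ≤ 2 := by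
  classical
  have h := finrank_span_le_card (R := Fq) ({x, y} : Set L)
  refine le_trans h ?_
  rw [Set.toFinset_insert, Set.toFinset_singleton]
  exact le_trans (Finset.card_insert_le _ _) (by simp)

end Construct2

section Cases
variable {Fq L : Type*} [Field Fq] [Field L] [Algebra Fq L] {n r : ℕ}
  [Fintype Fq] [FiniteDimensional Fq L]

lemma snoc_inj {s : ℕ} (τ : Fin s → Fin n) (k0 : Fin n) (hτinj : Function.Injective τ)
    (hτne : ∀ j, τ j ≠ k0) : Function.Injective (Fin.snoc τ k0 : Fin (s+1) → Fin n) := by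
  intro x y hxy
  rcases Fin.eq_castSucc_or_eq_last x with ⟨x', rfl⟩ | rfl <;>
    rcases Fin.eq_castSucc_or_eq_last y with ⟨y', rfl⟩ | rfl
  · rw [Fin.snoc_castSucc, Fin.snoc_castSucc] at hxy
    rw [hτinj hxy]
  · rw [Fin.snoc_castSucc, Fin.snoc_last] at hxy
    exact absurd hxy (hτne x')
  · rw [Fin.snoc_last, Fin.snoc_castSucc] at hxy
    exact absurd hxy.symm (hτne y')
  · rfl

lemma case_I (hr1 : 1 ≤ r) (hn : r + 3 ≤ n) (hm : r + 2 ≤ Module.finrank Fq L)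
    (u : (Fin n → L) →ₗ[L] L) (k0 : Fin n) (hk0 : u (Pi.single k0 1) = 1)
    (tstar : Fin n) (hts : u (Pi.single tstar 1) ∉ Set.range (algebraMap Fq L)) :
    ∃ v w : Fin n → L, rkVec Fq v ≤ r + 1 ∧ rkVec Fq w ≤ r + 1 ∧ u v = 1 ∧ u w = 1 ∧
      r + 2 ≤ rkVec Fq (v - w) := by
  classical
  set φ := algebraMap Fq L with hφ
  have htsk0 : tstar ≠ k0 := by
    rintro rfl
    exact hts ⟨1, by rw [map_one, hk0]⟩
  have hcard : r ≤ ((Finset.univ.erase k0).erase tstar).card := by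
    rw [Finset.card_erase_of_mem (Finset.mem_erase.mpr ⟨htsk0, Finset.mem_univ _⟩),
      Finset.card_erase_of_mem (Finset.mem_univ _), Finset.card_univ, Fintype.card_fin]
    omega
  obtain ⟨T, hTsub, hTcard⟩ := Finset.exists_subset_card_eq hcard
  set τ : Fin r → Fin n := fun j => ((T.orderIsoOfFin hTcard) j : Fin n) with hτ
  have hτinj : Function.Injective τ :=
    fun a b hab => (T.orderIsoOfFin hTcard).injective (Subtype.ext hab)
  have hτmem : ∀ j, τ j ∈ (Finset.univ.erase k0).erase tstar := fun j =>
    hTsub ((T.orderIsoOfFin hTcard) j).2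
  have hτnets : ∀ j, τ j ≠ tstar := fun j => Finset.ne_of_mem_erase (hτmem j)
  have hτnek0 : ∀ j, τ j ≠ k0 :=
    fun j => Finset.ne_of_mem_erase (Finset.mem_of_mem_erase (hτmem j))
  obtain ⟨b, hb⟩ := exists_indep_family (Fq := Fq) (L := L) r (by omega)
  set ω : L := - u (Pi.single tstar 1) with hω
  set ψ0 : L := - ∑ j, b j * u (Pi.single (τ j) 1) with hψ0
  have Hdeg : ∀ (a : Fin r → Fq) (a_t a_ψ : Fq),
      φ a_t + φ a_ψ * ω = 0 →
      (∑ j, φ (a j) * b j) + φ a_ψ * ψ0 = 0 →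
      a = 0 ∧ a_t = 0 ∧ a_ψ = 0 := by
    intro a a_t a_ψ hκ hres
    have haψ : a_ψ = 0 := by
      by_contra haψ
      apply hts
      refine ⟨a_t / a_ψ, ?_⟩
      have hφψ : φ a_ψ ≠ 0 := fun h => haψ ((algebraMap Fq L).injective (by rwa [map_zero]))
      rw [hω] at hκ
      have hval : φ a_t = φ a_ψ * u (Pi.single tstar 1) := by linear_combination hκ
      rw [map_div₀, hval, mul_comm, mul_div_assoc, div_self hφψ, mul_one]
    have hat : a_t = 0 := by
      rw [haψ] at hκ
      simp only [map_zero, zero_mul, add_zero] at hκ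
      exact (algebraMap Fq L).injective (by rwa [map_zero])
    have ha : a = 0 := by
      rw [haψ] at hres
      simp only [map_zero, zero_mul, add_zero] at hres
      have hres' : ∑ j, a j • b j = 0 := by
        rw [← hres]
        exact Finset.sum_congr rfl (fun j _ => by rw [Algebra.smul_def])
      exact funext (Fintype.linearIndependent_iff.mp hb a hres')
    exact ⟨ha, hat, haψ⟩
  obtain ⟨t, hF⟩ := lemmaJ hm b ω ψ0 Hdeg
  set δ : L := 1 - ∑ j, b j * u (Pi.single (τ j) 1) with hδ
  set pv : Fin (r+1) → Fin n := Fin.snoc τ k0 with hpv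
  set cv : Fin (r+1) → L := Fin.snoc b δ with hcv
  set v := mkv L cv pv with hv
  set cw : Fin 2 → L := ![-t, 1 + t * u (Pi.single tstar 1)] with hcw
  set pw : Fin 2 → Fin n := ![tstar, k0] with hpw
  set w := mkv L cw pw with hw
  have hpv_inj : Function.Injective pv := snoc_inj τ k0 hτinj hτnek0
  have hpw_inj : Function.Injective pw := by
    intro x y hxy
    fin_cases x <;> fin_cases y <;> simp_all [hpw]
  have hu_v : u v = 1 := by
    rw [hv, u_mkv, Fin.sum_univ_castSucc]
    simp only [hcv, hpv, Fin.snoc_castSucc, Fin.snoc_last]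
    rw [hk0, hδ]
    ring
  have hu_w : u w = 1 := by
    rw [hw, u_mkv, Fin.sum_univ_two]
    simp only [hcw, hpw, Matrix.cons_val_zero, Matrix.cons_val_one, Matrix.head_cons]
    rw [hk0]
    ring
  have hv_rk : rkVec Fq v ≤ r + 1 := rkVec_mkv_le cv pv
  have hw_rk : rkVec Fq w ≤ r + 1 := le_trans (rkVec_mkv_le cw pw) (by omega)
  set pκ : Fin (r+2) → Fin n := Fin.snoc (Fin.snoc τ tstar) k0 with hpκ
  have hzcomp : (v - w) ∘ pκ = (Fin.snoc (Fin.snoc b t) (ψ0 + ω * t) : Fin (r+2) → L) := by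
    funext k
    simp only [Function.comp_apply, Pi.sub_apply]
    refine Fin.lastCases ?_ (fun k' => ?_) k
    · -- coordinate k0
      rw [hpκ, Fin.snoc_last, Fin.snoc_last]
      have hv0 : v k0 = δ := by
        have h := mkv_apply_eq cv pv hpv_inj (Fin.last r)
        rwa [hpv, hcv, Fin.snoc_last, Fin.snoc_last] at h
      have hw0 : w k0 = 1 + t * u (Pi.single tstar 1) := by
        have h := mkv_apply_eq cw pw hpw_inj 1
        rwa [hpw, hcw] at h
        -- pw 1 = k0
      rw [hv0, hw0, hδ, hψ0, hω]
      ring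
    · refine Fin.lastCases ?_ (fun j => ?_) k'
      · -- coordinate tstar
        rw [hpκ, Fin.snoc_castSucc, Fin.snoc_last, Fin.snoc_castSucc, Fin.snoc_last]
        have hv0 : v tstar = 0 := by
          refine mkv_apply_ne cv pv tstar (fun j' => ?_)
          rcases Fin.eq_castSucc_or_eq_last j' with ⟨j'', rfl⟩ | rfl
          · rw [hpv, Fin.snoc_castSucc]; exact hτnets j''
          · rw [hpv, Fin.snoc_last]; exact fun h => htsk0 h.symm
        have hw0 : w tstar = -t := by
          have h := mkv_apply_eq cw pw hpw_inj 0
          rwa [hpw, hcw] at h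
        rw [hv0, hw0]
        ring
      · -- coordinate τ j
        rw [hpκ, Fin.snoc_castSucc, Fin.snoc_castSucc, Fin.snoc_castSucc, Fin.snoc_castSucc]
        have hv0 : v (τ j) = b j := by
          have h := mkv_apply_eq cv pv hpv_inj j.castSucc
          rwa [hpv, hcv, Fin.snoc_castSucc, Fin.snoc_castSucc] at h
        have hw0 : w (τ j) = 0 := by
          refine mkv_apply_ne cw pw (τ j) (fun j' => ?_)
          fin_cases j'
          · simpa [hpw] using (hτnets j).symm
          · simpa [hpw] using (hτnek0 j).symm
        rw [hv0, hw0]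
        ring
  have hz_rk : r + 2 ≤ rkVec Fq (v - w) := by
    refine le_rkVec_of_linearIndependent (v - w) pκ ?_
    rw [show (v - w) ∘ pκ = _ from hzcomp]
    exact hF
  exact ⟨v, w, hv_rk, hw_rk, hu_v, hu_w, hz_rk⟩

end Cases

section Cases2
variable {Fq L : Type*} [Field Fq] [Field L] [Algebra Fq L] {n r : ℕ}
  [Fintype Fq] [FiniteDimensional Fq L]

lemma case_II (hr1 : 1 ≤ r) (hn : r + 3 ≤ n) (hm : r + 2 ≤ Module.finrank Fq L)
    (u : (Fin n → L) →ₗ[L] L) (k0 : Fin n) (hk0 : u (Pi.single k0 1) = 1)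
    (hall : ∀ k, u (Pi.single k 1) ∈ Set.range (algebraMap Fq L)) :
    ∃ v w : Fin n → L, rkVec Fq v ≤ r + 1 ∧ rkVec Fq w ≤ r + 1 ∧ u v = 1 ∧ u w = 1 ∧
      r + 2 ≤ rkVec Fq (v - w) := by
  classical
  set φ := algebraMap Fq L with hφ
  have hcard : r + 2 ≤ (Finset.univ.erase k0).card := by
    rw [Finset.card_erase_of_mem (Finset.mem_univ _), Finset.card_univ, Fintype.card_fin]
    omega
  obtain ⟨T, hTsub, hTcard⟩ := Finset.exists_subset_card_eq hcard
  set τ : Fin (r + 2) → Fin n := fun j => ((T.orderIsoOfFin hTcard) j : Fin n) with hτ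
  have hτinj : Function.Injective τ :=
    fun a b hab => (T.orderIsoOfFin hTcard).injective (Subtype.ext hab)
  have hτnek0 : ∀ j, τ j ≠ k0 := fun j =>
    Finset.ne_of_mem_erase (hTsub ((T.orderIsoOfFin hTcard) j).2)
  set pj : Fin r → Fin n := fun j => τ j.castSucc.castSucc with hpj
  set ti : Fin n := τ (Fin.last r).castSucc with hti
  set ti' : Fin n := τ (Fin.last (r + 1)) with hti'
  have hpj_ne_ti : ∀ j, pj j ≠ ti := fun j h =>
    (Fin.castSucc_lt_last j).ne (Fin.castSucc_injective _ (hτinj h))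
  have hpj_ne_ti' : ∀ j, pj j ≠ ti' := fun j h =>
    (Fin.castSucc_lt_last j.castSucc).ne (hτinj h)
  have hti_ne_ti' : ti ≠ ti' := fun h =>
    (Fin.castSucc_lt_last (Fin.last r)).ne (hτinj h)
  have hti_ne_k0 : ti ≠ k0 := hτnek0 _
  have hti'_ne_k0 : ti' ≠ k0 := hτnek0 _
  have hpj_inj : Function.Injective pj := fun a b hab =>
    Fin.castSucc_injective _ (Fin.castSucc_injective _ (hτinj hab))
  have hpj_ne_k0 : ∀ j, pj j ≠ k0 := fun j => hτnek0 _
  obtain ⟨h, hh_ind, hh0⟩ := exists_indep_family_one (Fq := Fq) (L := L) r (by omega)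
  set b : Fin r → L := fun j => h j.succ with hb
  have Hdeg : ∀ (a : Fin r → Fq) (a_t a_ψ : Fq),
      φ a_t + φ a_ψ * 1 = 0 →
      (∑ j, φ (a j) * b j) + φ a_ψ * 1 = 0 →
      a = 0 ∧ a_t = 0 ∧ a_ψ = 0 := by
    intro a a_t a_ψ hκ hres
    set c : Fin (r + 1) → Fq := Fin.cons a_ψ a with hc
    have hcomb : ∑ k, c k • h k = 0 := by
      rw [Fin.sum_univ_succ]
      simp only [hc, Fin.cons_zero, Fin.cons_succ]
      rw [hh0]
      have h1 : ∀ j : Fin r, a j • h j.succ = φ (a j) * b j := fun j => by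
        rw [Algebra.smul_def]
      rw [Finset.sum_congr rfl (fun j _ => h1 j), Algebra.smul_def]
      linear_combination hres
    have hzero := Fintype.linearIndependent_iff.mp hh_ind c hcomb
    have haψ : a_ψ = 0 := by simpa [hc] using hzero 0
    have ha : a = 0 := funext fun j => by simpa [hc] using hzero j.succ
    have hat : a_t = 0 := by
      rw [haψ] at hκ
      simp only [map_zero, zero_mul, add_zero] at hκ
      exact (algebraMap Fq L).injective (by rwa [map_zero])
    exact ⟨ha, hat, haψ⟩
  obtain ⟨t, hF⟩ := lemmaJ hm b 1 1 Hdeg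
  set δ : L := 1 - ∑ j, b j * u (Pi.single (pj j) 1) with hδ
  set ε : L := 1 + t * u (Pi.single ti 1) + (1 + t) * u (Pi.single ti' 1) with hε
  set pv : Fin (r + 1) → Fin n := Fin.snoc pj k0 with hpv
  set cv : Fin (r + 1) → L := Fin.snoc b δ with hcv
  set v := mkv L cv pv with hv
  set cw : Fin 3 → L := ![-t, -(1 + t), ε] with hcw
  set pw : Fin 3 → Fin n := ![ti, ti', k0] with hpw
  set w := mkv L cw pw with hw
  have hpv_inj : Function.Injective pv := snoc_inj pj k0 hpj_inj hpj_ne_k0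
  have hpw_inj : Function.Injective pw := by
    intro x y hxy
    fin_cases x <;> fin_cases y <;>
      simp only [hpw, Matrix.cons_val_zero, Matrix.cons_val_one, Matrix.head_cons,
        Matrix.cons_val_two, Matrix.tail_cons] at hxy ⊢ <;>
      first
        | rfl
        | exact absurd hxy hti_ne_ti'
        | exact absurd hxy hti_ne_k0
        | exact absurd hxy hti'_ne_k0
        | exact absurd hxy.symm hti_ne_ti'
        | exact absurd hxy.symm hti_ne_k0
        | exact absurd hxy.symm hti'_ne_k0
  have hu_v : u v = 1 := by
    rw [hv, u_mkv, Fin.sum_univ_castSucc]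
    simp only [hcv, hpv, Fin.snoc_castSucc, Fin.snoc_last]
    rw [hk0, hδ]
    ring
  have hu_w : u w = 1 := by
    rw [hw, u_mkv, Fin.sum_univ_three]
    simp only [hcw, hpw, Matrix.cons_val_zero, Matrix.cons_val_one, Matrix.head_cons,
      Matrix.cons_val_two, Matrix.tail_cons]
    rw [hk0, hε]
    ring
  have hv_rk : rkVec Fq v ≤ r + 1 := rkVec_mkv_le cv pv
  have hw_rk : rkVec Fq w ≤ r + 1 := by
    obtain ⟨α, hα⟩ := hall ti
    obtain ⟨β, hβ⟩ := hall ti'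
    set W : Submodule Fq L := span Fq ({1, t} : Set L) with hW
    have h1W : (1 : L) ∈ W := subset_span (by simp)
    have htW : t ∈ W := subset_span (by simp)
    have hcwW : ∀ j : Fin 3, cw j ∈ W := by
      intro j
      fin_cases j
      · exact neg_mem htW
      · exact neg_mem (add_mem h1W htW)
      · show ε ∈ W
        have hεe : ε = 1 + α • t + β • (1 + t) := by
          rw [Algebra.smul_def, Algebra.smul_def, hα, hβ, hε]
          ring
        rw [hεe]
        exact add_mem (add_mem h1W (Submodule.smul_mem _ _ htW))
          (Submodule.smul_mem _ _ (add_mem h1W htW))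
    have hsub : Set.range w ⊆ ↑W := by
      rintro x ⟨k, rfl⟩
      exact mkv_mem_of_coeffs cw pw W hcwW k
    calc rkVec Fq w ≤ Module.finrank Fq ↥W := rkVec_le_of_range_subset w W hsub
      _ ≤ 2 := finrank_span_pair_le 1 t
      _ ≤ r + 1 := by omega
  have hzcomp : (v - w) ∘ τ = (Fin.snoc (Fin.snoc b t) (1 + 1 * t) : Fin (r + 2) → L) := by
    funext k
    simp only [Function.comp_apply, Pi.sub_apply]
    refine Fin.lastCases ?_ (fun k' => ?_) k
    · -- coordinate ti'
      rw [Fin.snoc_last]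
      have hv0 : v (τ (Fin.last (r + 1))) = 0 := by
        refine mkv_apply_ne cv pv _ (fun j' => ?_)
        rcases Fin.eq_castSucc_or_eq_last j' with ⟨j'', rfl⟩ | rfl
        · rw [hpv, Fin.snoc_castSucc]; exact hpj_ne_ti' j''
        · rw [hpv, Fin.snoc_last]; exact fun hh => hti'_ne_k0 hh.symm
      have hw0 : w (τ (Fin.last (r + 1))) = -(1 + t) := by
        have hh := mkv_apply_eq cw pw hpw_inj 1
        rwa [hpw, hcw] at hh
      rw [hv0, hw0]
      ring
    · refine Fin.lastCases ?_ (fun j => ?_) k'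
      · -- coordinate ti
        rw [Fin.snoc_castSucc, Fin.snoc_last]
        have hv0 : v (τ (Fin.last r).castSucc) = 0 := by
          refine mkv_apply_ne cv pv _ (fun j' => ?_)
          rcases Fin.eq_castSucc_or_eq_last j' with ⟨j'', rfl⟩ | rfl
          · rw [hpv, Fin.snoc_castSucc]; exact hpj_ne_ti j''
          · rw [hpv, Fin.snoc_last]; exact fun hh => hti_ne_k0 hh.symm
        have hw0 : w (τ (Fin.last r).castSucc) = -t := by
          have hh := mkv_apply_eq cw pw hpw_inj 0
          rwa [hpw, hcw] at hh
        rw [hv0, hw0]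
        ring
      · -- coordinate pj j
        rw [Fin.snoc_castSucc, Fin.snoc_castSucc]
        have hv0 : v (τ j.castSucc.castSucc) = b j := by
          have hh := mkv_apply_eq cv pv hpv_inj j.castSucc
          rwa [hpv, hcv, Fin.snoc_castSucc, Fin.snoc_castSucc] at hh
        have hw0 : w (τ j.castSucc.castSucc) = 0 := by
          refine mkv_apply_ne cw pw _ (fun j' => ?_)
          fin_cases j'
          · simpa [hpw] using (hpj_ne_ti j).symm
          · simpa [hpw] using (hpj_ne_ti' j).symm
          · simpa [hpw] using (hpj_ne_k0 j).symm
        rw [hv0, hw0]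
        ring
  have hz_rk : r + 2 ≤ rkVec Fq (v - w) := by
    refine le_rkVec_of_linearIndependent (v - w) τ ?_
    rw [show (v - w) ∘ τ = _ from hzcomp]
    exact hF
  exact ⟨v, w, hv_rk, hw_rk, hu_v, hu_w, hz_rk⟩

lemma exists_bad_pair {i : ℕ} (hi2 : 2 ≤ i) (hn : i + 2 ≤ n)
    (hm : i + 1 ≤ Module.finrank Fq L)
    (u : (Fin n → L) →ₗ[L] L) (k0 : Fin n) (hk0 : u (Pi.single k0 1) = 1) :
    ∃ v w : Fin n → L, rkVec Fq v ≤ i ∧ rkVec Fq w ≤ i ∧ u v = 1 ∧ u w = 1 ∧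
      i + 1 ≤ rkVec Fq (v - w) := by
  obtain ⟨r, rfl⟩ : ∃ r, i = r + 1 := ⟨i - 1, by omega⟩
  by_cases hcase : ∀ k, u (Pi.single k 1) ∈ Set.range (algebraMap Fq L)
  · exact case_II (by omega) (by omega) (by omega) u k0 hk0 hcase
  · push_neg at hcase
    obtain ⟨tstar, hts⟩ := hcase
    exact case_I (by omega) (by omega) (by omega) u k0 hk0 tstar hts

end Cases2

theorem rml_supersolvable_iff (q m n : ℕ) (hq : IsPrimePow q) (hn : 2 ≤ n) (hm : 2 ≤ m)
    (Fq L : Type) [Field Fq] [Field L] [Algebra Fq L] [Fintype Fq]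
    (hcard : Fintype.card Fq = q) (hdim : Module.finrank Fq L = m)
    (i : ℕ) (hi : 1 ≤ i) (hin : i ≤ n) :
    RMLSupersolvable Fq L n i ↔ (i = 1 ∨ i = n - 1 ∨ i = n ∨ (2 ≤ m ∧ m ≤ i)) := by
  have hFD : FiniteDimensional Fq L := FiniteDimensional.of_finrank_pos (by omega)
  constructor
  · intro hss
    by_contra hRHS
    push_neg at hRHS
    obtain ⟨h1, h2, h3, h4⟩ := hRHS
    have hmi : i + 1 ≤ Module.finrank Fq L := by
      rw [hdim]
      have := h4 hm
      omega
    have hi2 : 2 ≤ i := by omega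
    have hn' : i + 2 ≤ n := by omega
    obtain ⟨c, hmono, h0, hlast, hprop⟩ := hss
    set jn : Fin (n + 1) := ⟨n - 1, by omega⟩ with hjn
    set X := c jn with hX
    have hfr : Module.finrank L ↥X = n - 1 := by
      have h := chain_finrank c hmono h0 hlast jn
      simpa [hjn] using h
    obtain ⟨u, hker⟩ := exists_functional X (by omega) hfr
    have hune : ∃ k0, u (Pi.single k0 1) ≠ 0 := by
      by_contra hcon
      push_neg at hcon
      have hXtop : X = ⊤ := by
        rw [← hker]
        rw [eq_top_iff]
        intro x _
        rw [LinearMap.mem_ker]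
        calc u x = u (∑ k, Pi.single k (x k)) := by rw [sum_single_eq]
          _ = ∑ k, u (Pi.single k (x k)) := map_sum u _ _
          _ = 0 := by
              refine Finset.sum_eq_zero (fun k _ => ?_)
              rw [single_eq_smul, map_smul, hcon k, smul_zero]
      rw [hXtop, finrank_top, Module.finrank_fintype_fun_eq_card, Fintype.card_fin] at hfr
      omega
    obtain ⟨k0, hk0ne⟩ := hune
    set u' : (Fin n → L) →ₗ[L] L := (u (Pi.single k0 1))⁻¹ • u with hu'
    have hker' : LinearMap.ker u' = X := by
      rw [hu', LinearMap.ker_smul _ _ (inv_ne_zero hk0ne), hker]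
    have hk0' : u' (Pi.single k0 1) = 1 := by
      rw [hu']
      simp only [LinearMap.smul_apply, smul_eq_mul]
      rw [inv_mul_cancel₀ hk0ne]
    obtain ⟨v, w, hv, hw, huv, huw, hz⟩ := exists_bad_pair hi2 hn' hmi u' k0 hk0'
    exact coatom_contra (by omega) X (hprop jn).2 hfr u' hker' v w hv hw huv huw hz
  · intro hRHS
    rcases hRHS with h1 | h2 | h3 | ⟨_, h5⟩
    · subst h1
      exact ⟨Zf L, Zf_strictMono, Zf_zero, Zf_last,
        fun j => ⟨Zf_mem_RML Fq 1 le_rfl j, Zf_modular_one j⟩⟩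
    · exact ss_of_easy hi (Or.inr (Or.inr h2)) (by omega)
    · exact ss_of_easy hi (Or.inl h3) (by omega)
    · exact ss_of_easy hi (Or.inr (Or.inl (by rw [hdim]; exact h5))) (by omega)
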